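/- arXiv:quant-ph/9608006 — 6 statements merged into one kernel-verified Lean document; each statement's English description precedes it below -/
import Mathlib

section
/- Every even additive code C ⊆ GF(4)ⁿ is self-orthogonal with respect to the trace inner product (C ⊆ C⊥); and every GF(4)-linear code C ⊆ GF(4)ⁿ that is self-orthogonal with respect to the trace inner product is even. -/
/-!
Over `GF(4)` the cube map is the indicator of `x ≠ 0`, since `x ^ 3 = 1` for `x ≠ 0`.
In characteristic `2`, `(x + y) ^ 3 + x ^ 3 + y ^ 3 = x * y ^ 2 + x ^ 2 * y`, so summing over
coordinates gives `u ∗ v = wt (u + v) + wt u + wt v` mod `2`; hence an even additive code is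
self-orthogonal. Conversely, for `ω ∉ {0, 1}` the vectors `ω • u` and `(1 + ω) • u = u + ω • u`
have the weight of `u`, so `u ∗ (ω • u) = 3 wt u = wt u` mod `2`, which vanishes when a linear
code is self-orthogonal.
-/

noncomputable section

open Finset Polynomial

/-- The field `GF(4)` with four elements. -/
abbrev F4 := GaloisField 2 2

/-- The trace inner product `u∗v = Σⱼ (uⱼ v̄ⱼ + ūⱼ vⱼ)` on `GF(4)ⁿ`,
where conjugation is `x̄ = x²`.  It takes values in the prime subfield. -/
def trIP {n : ℕ} (u v : Fin n → F4) : F4 :=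
  ∑ j, (u j * (v j) ^ 2 + (u j) ^ 2 * v j)

/-- The Hamming weight of a vector in `GF(4)ⁿ`. -/
def wt {n : ℕ} (u : Fin n → F4) : ℕ := Set.ncard {j | u j ≠ 0}

/-- The dual of a code with respect to the trace inner product. -/
def trDual {n : ℕ} (C : Set (Fin n → F4)) : Set (Fin n → F4) :=
  {u | ∀ v ∈ C, trIP u v = 0}

theorem CharTwo.even_iff_natCast_eq_zero {R : Type*} [AddMonoidWithOne R] [CharP R 2] {m : ℕ} :
    Even m ↔ (m : R) = 0 := by
  rw [CharP.cast_eq_zero_iff R 2, even_iff_two_dvd]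

namespace F4

theorem nat_card : Nat.card F4 = 4 :=
  GaloisField.card 2 2 two_ne_zero

theorem pow_three_eq_one {x : F4} (hx : x ≠ 0) : x ^ 3 = 1 := by
  let : Fintype F4 := Fintype.ofFinite F4
  have hcard : Fintype.card F4 = 4 := by rw [← Nat.card_eq_fintype_card, nat_card]
  simpa [hcard] using FiniteField.pow_card_sub_one_eq_one x hx

theorem exists_ne_zero_ne_one : ∃ c : F4, c ≠ 0 ∧ c ≠ 1 := by
  classical
  let : Fintype F4 := Fintype.ofFinite F4
  have hlt : #({0, 1} : Finset F4) < #(univ : Finset F4) := by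
    rw [card_univ, ← Nat.card_eq_fintype_card, nat_card]
    exact (card_le_two).trans_lt (by norm_num)
  obtain ⟨c, -, hc⟩ := exists_mem_notMem_of_card_lt_card hlt
  simp only [mem_insert, mem_singleton, not_or] at hc
  exact ⟨c, hc⟩

end F4

theorem natCast_wt {n : ℕ} (u : Fin n → F4) : (wt u : F4) = ∑ j, u j ^ 3 := by
  classical
  rw [wt, Set.ncard_eq_toFinset_card', Set.toFinset_ofPred, card_filter]
  push_cast
  refine sum_congr rfl fun j _ => ?_
  by_cases hj : u j = 0 <;> simp [hj, F4.pow_three_eq_one]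

theorem wt_smul {n : ℕ} {c : F4} (hc : c ≠ 0) (u : Fin n → F4) : wt (c • u) = wt u := by
  simp [wt, hc]

theorem trIP_eq_wt_add_add {n : ℕ} (u v : Fin n → F4) :
    trIP u v = wt (u + v) + wt u + wt v := by
  simp only [natCast_wt, trIP, Pi.add_apply, ← sum_add_distrib]
  refine sum_congr rfl fun j _ => ?_
  linear_combination
    -(u j ^ 3 + v j ^ 3 + u j * v j ^ 2 + u j ^ 2 * v j) * CharTwo.two_eq_zero (R := F4)

theorem trIP_smul_self {n : ℕ} {c : F4} (hc₀ : c ≠ 0) (hc₁ : c ≠ 1) (u : Fin n → F4) :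
    trIP u (c • u) = wt u := by
  have hc₁' : 1 + c ≠ 0 := by
    rwa [Ne, add_eq_zero_iff_eq_neg, CharTwo.neg_eq, eq_comm]
  have hsum : u + c • u = (1 + c) • u := by rw [add_smul, one_smul]
  rw [trIP_eq_wt_add_add, hsum, wt_smul hc₁', wt_smul hc₀]
  linear_combination (wt u : F4) * CharTwo.two_eq_zero (R := F4)

/-- An even additive code is self-orthogonal, and a self-orthogonal
GF(4)-linear code is even. -/
theorem even_additive_selforth_and_linear_selforth_even (n : ℕ) :
    (∀ C : AddSubgroup (Fin n → F4),
        (∀ u ∈ C, Even (wt u)) → ∀ u ∈ C, ∀ v ∈ C, trIP u v = 0) ∧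
    (∀ C : Submodule F4 (Fin n → F4),
        (∀ u ∈ C, ∀ v ∈ C, trIP u v = 0) → ∀ u ∈ C, Even (wt u)) := by
  have heven {m : ℕ} : Even m ↔ (m : F4) = 0 := CharTwo.even_iff_natCast_eq_zero
  refine ⟨fun C hC u hu v hv => ?_, fun C hC u hu => ?_⟩
  · rw [trIP_eq_wt_add_add, heven.mp (hC _ (C.add_mem hu hv)), heven.mp (hC u hu),
      heven.mp (hC v hv), add_zero, add_zero]
  · obtain ⟨ω, hω₀, hω₁⟩ := F4.exists_ne_zero_ne_one
    rw [heven, ← trIP_smul_self hω₀ hω₁]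
    exact hC u hu _ (C.smul_mem ω hu)
end
end

section
/- Let n ≥ 1 and let C ⊆ GF(4)ⁿ be a self-dual additive code (C = C⊥ with respect to the trace inner product). Then C contains a nonzero vector of Hamming weight at most ⌊n/2⌋ + 1; that is, the minimal distance of C is at most ⌊n/2⌋ + 1. -/
noncomputable section

open Finset Polynomial

namespace SelfDualAux

instance : Fintype F4 := Fintype.ofFinite _

lemma card_F4 : Fintype.card F4 = 4 := by
  have h := Module.card_eq_pow_finrank (K := ZMod 2) (V := F4)
  rw [ZMod.card, GaloisField.finrank 2 (by norm_num)] at h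
  simpa using h

lemma pow_four (x : F4) : x ^ 4 = x := by
  have := FiniteField.pow_card x
  rwa [card_F4] at this

lemma trIP_sq {n : ℕ} (u v : Fin n → F4) : trIP u v ^ 2 = trIP u v := by
  have hf : trIP u v ^ 2 = frobenius F4 2 (trIP u v) := by
    rw [frobenius_def]
  rw [hf]
  unfold trIP
  rw [map_sum]
  refine Finset.sum_congr rfl fun j _ => ?_
  rw [frobenius_def]
  have h1 : (u j * v j ^ 2 + u j ^ 2 * v j) ^ 2
      = u j ^ 2 * (v j ^ 2) ^ 2 + (u j ^ 2) ^ 2 * v j ^ 2 := by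
    rw [add_pow_char]
    ring
  rw [h1]
  have h2 : (v j ^ 2) ^ 2 = v j := by rw [← pow_mul]; exact pow_four _
  have h3 : (u j ^ 2) ^ 2 = u j := by rw [← pow_mul]; exact pow_four _
  rw [h2, h3]
  ring

lemma trIP_eq_zero_or_one {n : ℕ} (u v : Fin n → F4) : trIP u v = 0 ∨ trIP u v = 1 := by
  have h := trIP_sq u v
  have : trIP u v * (trIP u v - 1) = 0 := by
    have : trIP u v ^ 2 - trIP u v = 0 := by rw [h]; ring
    calc trIP u v * (trIP u v - 1) = trIP u v ^ 2 - trIP u v := by ring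
    _ = 0 := this
  rcases mul_eq_zero.1 this with h' | h'
  · exact Or.inl h'
  · exact Or.inr (by linear_combination h')

lemma trIP_comm {n : ℕ} (u v : Fin n → F4) : trIP u v = trIP v u := by
  unfold trIP
  exact Finset.sum_congr rfl fun j _ => by ring

lemma trIP_add_right {n : ℕ} (u v w : Fin n → F4) :
    trIP u (v + w) = trIP u v + trIP u w := by
  unfold trIP
  rw [← Finset.sum_add_distrib]
  refine Finset.sum_congr rfl fun j _ => ?_
  simp only [Pi.add_apply]
  rw [add_pow_char]
  ring

lemma trIP_add_left {n : ℕ} (u v w : Fin n → F4) :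
    trIP (u + v) w = trIP u w + trIP v w := by
  rw [trIP_comm, trIP_add_right, trIP_comm w u, trIP_comm w v]

end SelfDualAux

open SelfDualAux in
/-- A self-dual additive code of length n ≥ 1 has minimal distance at most
⌊n/2⌋ + 1. -/
theorem selfdual_min_distance_le (n : ℕ) (hn : 1 ≤ n)
    (C : AddSubgroup (Fin n → F4))
    (hsd : (C : Set (Fin n → F4)) = trDual (C : Set (Fin n → F4))) :
    ∃ v ∈ C, v ≠ 0 ∧ wt v ≤ n / 2 + 1 := by
  classical
  -- a linear functional on F4 over ZMod 2 which does not kill 1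
  obtain ⟨φ, hφ⟩ : ∃ φ : Module.Dual (ZMod 2) F4, φ 1 ≠ 0 := by
    by_contra h
    push_neg at h
    exact one_ne_zero ((Module.forall_dual_apply_eq_zero_iff (ZMod 2) (1 : F4)).1 h)
  have hφiff : ∀ u v : Fin n → F4, (φ (trIP u v) = 0 ↔ trIP u v = 0) := by
    intro u v
    rcases trIP_eq_zero_or_one u v with h | h
    · simp [h]
    · rw [h]
      exact ⟨fun h0 => absurd h0 hφ, fun h0 => absurd h0 one_ne_zero⟩
  -- the bilinear form over ZMod 2
  let B₀ : (Fin n → F4) → (Fin n → F4) →ₗ[ZMod 2] ZMod 2 := fun u =>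
    AddMonoidHom.toZModLinearMap 2
      (AddMonoidHom.mk' (fun v => φ (trIP u v)) (by
        intro v w
        show φ (trIP u (v + w)) = φ (trIP u v) + φ (trIP u w)
        rw [trIP_add_right, map_add]))
  let B : LinearMap.BilinForm (ZMod 2) (Fin n → F4) :=
    AddMonoidHom.toZModLinearMap 2
      (AddMonoidHom.mk' B₀ (by
        intro u u'
        apply LinearMap.ext
        intro v
        show φ (trIP (u + u') v) = φ (trIP u v) + φ (trIP u' v)
        rw [trIP_add_left, map_add]))
  have hBapp : ∀ u v, B u v = φ (trIP u v) := fun _ _ => rfl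
  have hrefl : B.IsRefl := by
    intro u v h
    rw [hBapp] at h ⊢
    rw [trIP_comm]
    exact h
  -- the code as a ZMod 2 submodule
  let M : Submodule (ZMod 2) (Fin n → F4) := AddSubgroup.toZModSubmodule 2 C
  have hMmem : ∀ x, x ∈ M ↔ x ∈ C := fun x => Iff.rfl
  have horth : B.orthogonal M = M := by
    ext x
    rw [LinearMap.BilinForm.mem_orthogonal_iff]
    constructor
    · intro hx
      rw [hMmem, ← SetLike.mem_coe, hsd]
      intro v hv
      rw [trIP_comm]
      exact (hφiff v x).1 (hx v hv)
    · intro hx v hv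
      have hx' : x ∈ trDual (C : Set (Fin n → F4)) := by rw [← hsd]; exact hx
      refine (hφiff v x).2 ?_
      rw [trIP_comm]
      exact hx' v hv
  -- dimension count : finrank M ≥ n
  haveI : FiniteDimensional (ZMod 2) (Fin n → F4) := by infer_instance
  have hdim := LinearMap.BilinForm.finrank_add_finrank_orthogonal hrefl M
  rw [horth] at hdim
  have hV : Module.finrank (ZMod 2) (Fin n → F4) = 2 * n := by
    rw [Module.finrank_pi_fintype (ZMod 2)]
    simp [GaloisField.finrank 2 (by norm_num : 2 ≠ 0), Finset.sum_const, mul_comm]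
  have hk : n ≤ Module.finrank (ZMod 2) M := by omega
  -- counting / pigeonhole
  haveI : Fintype M := Fintype.ofFinite _
  have hcardM : Fintype.card M = 2 ^ Module.finrank (ZMod 2) M := by
    have h := Module.card_eq_pow_finrank (K := ZMod 2) (V := M)
    rwa [ZMod.card] at h
  set s : ℕ := n - (n / 2 + 1) with hs
  obtain ⟨S, -, hS⟩ := Finset.exists_subset_card_eq
    (show s ≤ (Finset.univ : Finset (Fin n)).card by rw [Finset.card_univ, Fintype.card_fin]; omega)
  have hcardlt : Fintype.card (S → F4) < Fintype.card M := by
    rw [Fintype.card_fun, Fintype.card_coe, hS, card_F4, hcardM]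
    calc (4 : ℕ) ^ s = 2 ^ (2 * s) := by rw [pow_mul]; norm_num
    _ < 2 ^ n := Nat.pow_lt_pow_right (by norm_num) (by omega)
    _ ≤ 2 ^ Module.finrank (ZMod 2) M := Nat.pow_le_pow_right (by norm_num) hk
  obtain ⟨x, y, hxy, hfeq⟩ := Fintype.exists_ne_map_eq_of_card_lt
    (fun (z : M) (j : S) => (z : Fin n → F4) j) hcardlt
  refine ⟨(x : Fin n → F4) - (y : Fin n → F4), sub_mem x.2 y.2, ?_, ?_⟩
  · intro h
    exact hxy (Subtype.ext (sub_eq_zero.1 h))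
  · have hsub : {j | ((x : Fin n → F4) - (y : Fin n → F4)) j ≠ 0} ⊆ (↑(Sᶜ) : Set (Fin n)) := by
      intro j hj
      simp only [Finset.coe_compl, Set.mem_compl_iff, Finset.mem_coe]
      intro hjS
      apply hj
      have := congrFun hfeq ⟨j, hjS⟩
      simp only [Pi.sub_apply]
      rw [sub_eq_zero]
      exact this
    calc wt ((x : Fin n → F4) - (y : Fin n → F4))
        ≤ (↑(Sᶜ) : Set (Fin n)).ncard :=
          Set.ncard_le_ncard hsub (Set.toFinite _)
      _ = (Sᶜ).card := Set.ncard_coe_finset _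
      _ = n - s := by rw [Finset.card_compl, hS, Fintype.card_fin]
      _ ≤ n / 2 + 1 := by omega
end
end

section
/- Suppose 0 < k ≤ n and there exists an additive self-orthogonal code C ⊆ GF(4)ⁿ with |C| = 2^{n−k} such that every vector of C⊥ ∖ C has Hamming weight at least d. Then there exists an additive self-orthogonal code B ⊆ GF(4)^{n+1} with |B| = 2^{(n+1)−k} such that every vector of B⊥ ∖ B has Hamming weight at least d. (If an [[n,k,d]] quantum code exists with k > 0, then an [[n+1,k,d]] code exists.) -/
noncomputable section

open Finset Polynomial

/-- An [[n,k,d]] quantum code exists (in the additive sense): there is an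
additive self-orthogonal code C ⊆ GF(4)ⁿ with |C| = 2^(n-k) such that every
vector of C⊥ ∖ C has Hamming weight at least d. -/
def QCodeExists (n k d : ℕ) : Prop :=
  ∃ C : AddSubgroup (Fin n → F4),
    (C : Set (Fin n → F4)) ⊆ trDual (C : Set (Fin n → F4)) ∧
    Nat.card C = 2 ^ (n - k) ∧
    ∀ v ∈ trDual (C : Set (Fin n → F4)) \ (C : Set (Fin n → F4)), d ≤ wt v

lemma trIP_snoc {n : ℕ} (u v : Fin n → F4) (a b : F4) :
    trIP (Fin.snoc u a) (Fin.snoc v b) = trIP u v + (a * b ^ 2 + a ^ 2 * b) := by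
  unfold trIP
  rw [Fin.sum_univ_castSucc]
  simp

lemma trIP_snoc_left {n : ℕ} (v : Fin (n + 1) → F4) (u : Fin n → F4) (b : F4) :
    trIP v (Fin.snoc u b) =
      trIP (Fin.init v) u +
        (v (Fin.last n) * b ^ 2 + (v (Fin.last n)) ^ 2 * b) := by
  conv_lhs => rw [← Fin.snoc_init_self v]
  rw [trIP_snoc]

lemma trIP_zero_right {n : ℕ} (u : Fin n → F4) : trIP u 0 = 0 := by
  unfold trIP; simp

lemma wt_init_le {n : ℕ} (v : Fin (n + 1) → F4) : wt (Fin.init v) ≤ wt v := by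
  unfold wt
  have h : Fin.castSucc '' {j | Fin.init v j ≠ 0} ⊆ {j | v j ≠ 0} := by
    rintro _ ⟨j, hj, rfl⟩; exact hj
  calc Set.ncard {j | Fin.init v j ≠ 0}
      = Set.ncard (Fin.castSucc '' {j | Fin.init v j ≠ 0}) :=
        (Set.ncard_image_of_injective _ (Fin.castSucc_injective n)).symm
    _ ≤ _ := Set.ncard_le_ncard h (Set.toFinite _)

/-- If an [[n,k,d]] quantum code exists with k > 0, then an [[n+1,k,d]] code
exists. -/
theorem qcode_lengthen (n k d : ℕ) (hk : 0 < k) (hkn : k ≤ n)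
    (h : QCodeExists n k d) : QCodeExists (n + 1) k d := by
  classical
  obtain ⟨C, hso, hcard, hd⟩ := h
  set B : AddSubgroup (Fin (n + 1) → F4) :=
    { carrier := {f | Fin.init f ∈ C ∧ (f (Fin.last n)) ^ 2 = f (Fin.last n)}
      zero_mem' := ⟨C.zero_mem, by simp⟩
      add_mem' := by
        rintro f g ⟨hf1, hf2⟩ ⟨hg1, hg2⟩
        refine ⟨C.add_mem hf1 hg1, ?_⟩
        show (f (Fin.last n) + g (Fin.last n)) ^ 2 = _
        rw [CharTwo.add_sq, hf2, hg2]; rfl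
      neg_mem' := by
        rintro f ⟨hf1, hf2⟩
        refine ⟨C.neg_mem hf1, ?_⟩
        show (-(f (Fin.last n))) ^ 2 = -(f (Fin.last n))
        rw [CharTwo.neg_eq]; exact hf2 } with hB
  have memB : ∀ f : Fin (n + 1) → F4,
      f ∈ B ↔ Fin.init f ∈ C ∧ (f (Fin.last n)) ^ 2 = f (Fin.last n) :=
    fun f => Iff.rfl
  refine ⟨B, ?_, ?_, ?_⟩
  · -- self-orthogonality
    intro f hf g hg
    obtain ⟨hf1, hf2⟩ := (memB f).mp hf
    obtain ⟨hg1, hg2⟩ := (memB g).mp hg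
    conv_lhs => rw [← Fin.snoc_init_self f, ← Fin.snoc_init_self g]
    rw [trIP_snoc, hf2, hg2, hso hf1 _ hg1, CharTwo.add_self_eq_zero,
      add_zero]
  · -- cardinality
    have hone : (1 : F4) ≠ 0 := one_ne_zero
    let ψ : C × Bool → B := fun p =>
      ⟨Fin.snoc (p.1 : Fin n → F4) (if p.2 then 1 else 0),
        by
          refine (memB _).mpr ⟨?_, ?_⟩
          · rw [Fin.init_snoc]; exact p.1.2
          · rw [Fin.snoc_last]; cases p.2 <;> simp⟩
    have hbij : Function.Bijective ψ := by
      constructor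
      · rintro ⟨u, b⟩ ⟨u', b'⟩ hp
        have hpp := congrArg Subtype.val hp
        have hu : (u : Fin n → F4) = u' := by
          funext j
          have := congrFun hpp j.castSucc
          simpa [ψ, Fin.snoc_castSucc] using this
        have hb : (if b then (1:F4) else 0) = (if b' then 1 else 0) := by
          have := congrFun hpp (Fin.last n)
          simpa [ψ, Fin.snoc_last] using this
        have hb' : b = b' := by
          cases b <;> cases b' <;> simp_all
        exact Prod.ext (Subtype.ext hu) hb'
      · rintro ⟨f, hf⟩
        rw [memB] at hf
        refine ⟨⟨⟨Fin.init f, hf.1⟩, if f (Fin.last n) = 0 then false else true⟩,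
          Subtype.ext ?_⟩
        show Fin.snoc (Fin.init f) _ = f
        by_cases h0 : f (Fin.last n) = 0
        · rw [show (if (if f (Fin.last n) = 0 then false else true) = true
              then (1:F4) else 0) = f (Fin.last n) by simp [h0],
            Fin.snoc_init_self]
        · have h1 : f (Fin.last n) = 1 :=
            mul_left_cancel₀ h0 (by rw [mul_one, ← sq]; exact hf.2)
          rw [show (if (if f (Fin.last n) = 0 then false else true) = true
              then (1:F4) else 0) = f (Fin.last n) by simp [h0, h1],
            Fin.snoc_init_self]
    have hcardB : Nat.card B = Nat.card C * 2 := by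
      rw [Nat.card_congr (Equiv.ofBijective ψ hbij).symm, Nat.card_prod]
      simp [Nat.card_eq_fintype_card]
    rw [hcardB, hcard, ← pow_succ]
    congr 1
    omega
  · -- distance
    rintro v ⟨hvd, hvnB⟩
    have h2 : (v (Fin.last n)) ^ 2 = v (Fin.last n) := by
      have hm : Fin.snoc (0 : Fin n → F4) (1 : F4) ∈ B := by
        refine (memB _).mpr ⟨?_, ?_⟩
        · rw [Fin.init_snoc]; exact C.zero_mem
        · rw [Fin.snoc_last]; simp
      have := hvd _ hm
      rw [trIP_snoc_left, trIP_zero_right, zero_add, one_pow, mul_one,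
        mul_one] at this
      have h' := add_eq_zero_iff_neg_eq.mp this
      rw [CharTwo.neg_eq] at h'
      exact h'.symm
    have h1 : Fin.init v ∈ trDual (C : Set (Fin n → F4)) := by
      intro u hu
      have hm : Fin.snoc u (0 : F4) ∈ B := by
        refine (memB _).mpr ⟨?_, ?_⟩
        · rw [Fin.init_snoc]; exact hu
        · rw [Fin.snoc_last]; simp
      have := hvd _ hm
      rw [trIP_snoc_left] at this
      simpa using this
    have h3 : Fin.init v ∉ (C : Set (Fin n → F4)) := by
      intro hw
      exact hvnB ((memB v).mpr ⟨hw, h2⟩)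
    exact le_trans (hd _ ⟨h1, h3⟩) (wt_init_le v)
end
end

section
/- Suppose n ≥ 2, d ≥ 1, 0 ≤ k ≤ n−1, and there exists an additive self-orthogonal code C ⊆ GF(4)ⁿ with |C| = 2^{n−k} such that every vector of C⊥ ∖ C has Hamming weight at least d. Then there exists an additive self-orthogonal code B ⊆ GF(4)^{n−1} with |B| = 2^{(n−1)−k} such that every vector of B⊥ ∖ B has Hamming weight at least d − 1. (If an [[n,k,d]] code exists with n ≥ 2, then an [[n−1,k,d−1]] code exists.) -/
noncomputable section

open Finset Polynomial

/-!
Pick a codeword `w` with a nonzero entry `c` at a coordinate `j`, and `a ∉ {0, c}` such that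
`a eⱼ ∉ C`; such an `a` exists because for `z ∉ {0, c}` the vectors `z eⱼ` and `(z + c) eⱼ`
are not trace-orthogonal. The codewords whose `j`-th entry lies in the subgroup `{0, a}` of
`GF(4)` form a subcode `C₀` of index 2 in `C` (translation by `w` swaps the two cosets), and
deleting coordinate `j` maps `C₀` injectively onto the shortened code `B`. As `{0, a}` is
isotropic for the trace form, `B` is self-orthogonal. A vector `u ∈ B⊥ \ B`, extended at `j` by
the `x ∈ {0, a}` that makes it orthogonal to `w`, becomes orthogonal to `C₀` and `w`, hence to
`C`, and lies outside `C`, so `d ≤ wt u + 1`.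
-/

instance : Fintype F4 := Fintype.ofFinite _

lemma CharTwo.mem_zmultiples_iff {R : Type*} [Ring R] [CharP R 2] {a x : R} :
    x ∈ AddSubgroup.zmultiples a ↔ x = 0 ∨ x = a := by
  simp only [AddSubgroup.mem_zmultiples_iff, zsmul_eq_mul]
  constructor
  · rintro ⟨k, rfl⟩
    rcases CharTwo.intCast_cases (R := R) k with h | h <;> simp [h]
  · rintro (rfl | rfl)
    exacts [⟨0, by simp⟩, ⟨1, by simp⟩]

lemma CharTwo.notMem_zmultiples_of_ne {R : Type*} [Ring R] [CharP R 2] {a c : R} (hc : c ≠ 0)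
    (hac : a ≠ c) : c ∉ AddSubgroup.zmultiples a := by
  rw [CharTwo.mem_zmultiples_iff]
  exact not_or.2 ⟨hc, hac.symm⟩

lemma AddSubgroup.card_eq_relIndex_mul_card {A : Type*} [AddGroup A] {H K : AddSubgroup A}
    (hHK : H ≤ K) : Nat.card K = H.relIndex K * Nat.card H := by
  rw [← relIndex_bot_left, ← relIndex_bot_left, ← relIndex_mul_relIndex ⊥ H K bot_le hHK, mul_comm]

def removeNthAddMonoidHom {m : ℕ} {M : Type*} [AddZeroClass M] (j : Fin (m + 1)) :
    (Fin (m + 1) → M) →+ (Fin m → M) where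
  toFun := j.removeNth
  map_zero' := rfl
  map_add' _ _ := rfl

namespace F4

lemma card_eq : Fintype.card F4 = 4 := by
  rw [Fintype.card_eq_nat_card, GaloisField.card 2 2 two_ne_zero]; rfl

lemma pow_four (x : F4) : x ^ 4 = x := card_eq ▸ FiniteField.pow_card x

lemma index_zmultiples {a : F4} (ha : a ≠ 0) : (AddSubgroup.zmultiples a).index = 2 := by
  have h := (AddSubgroup.zmultiples a).card_mul_index
  rw [Nat.card_zmultiples, addOrderOf_eq_prime (CharTwo.two_nsmul a) ha, Nat.card_eq_fintype_card,
    card_eq] at h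
  omega

lemma add_mem_zmultiples_or_mem {a c : F4} (ha : a ≠ 0) (hc : c ∉ AddSubgroup.zmultiples a)
    (x : F4) : x + c ∈ AddSubgroup.zmultiples a ∨ x ∈ AddSubgroup.zmultiples a := by
  have := AddSubgroup.add_mem_iff_of_index_two (index_zmultiples ha) (a := x) (b := c)
  tauto

lemma exists_notMem_zmultiples {c : F4} (hc : c ≠ 0) : ∃ z, z ∉ AddSubgroup.zmultiples c := by
  by_contra! h
  have := AddSubgroup.index_eq_one.2 (eq_top_iff.2 fun z _ => h z)
  rw [index_zmultiples hc] at this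
  exact absurd this (by norm_num)

end F4

def trForm (x y : F4) : F4 := x * y ^ 2 + x ^ 2 * y

lemma trForm_self (x : F4) : trForm x x = 0 := by
  rw [trForm, ← pow_succ', ← pow_succ, CharTwo.add_self_eq_zero]

lemma trForm_sq (x y : F4) : trForm x y ^ 2 = trForm x y := by
  have hx := F4.pow_four x
  have hy := F4.pow_four y
  rw [trForm, CharTwo.add_sq]
  linear_combination x ^ 2 * hy + y ^ 2 * hx

lemma trForm_eq_one {x y : F4} (hx : x ≠ 0) (hy : y ≠ 0) (hxy : x ≠ y) : trForm x y = 1 := by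
  have hne : trForm x y ≠ 0 := by
    have : trForm x y = x * y * (x + y) := by rw [trForm]; ring
    rw [this]
    exact mul_ne_zero (mul_ne_zero hx hy) fun h => hxy (CharTwo.add_eq_zero.1 h)
  have hidem : IsIdempotentElem (trForm x y) := by rw [IsIdempotentElem, ← sq, trForm_sq]
  exact (IsIdempotentElem.iff_eq_zero_or_one.1 hidem).resolve_left hne

lemma trForm_eq_zero_of_mem_zmultiples {a x y : F4} (hx : x ∈ AddSubgroup.zmultiples a)
    (hy : y ∈ AddSubgroup.zmultiples a) : trForm x y = 0 := by
  rw [CharTwo.mem_zmultiples_iff] at hx hy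
  rcases hx with rfl | rfl
  · simp [trForm]
  rcases hy with rfl | rfl
  · simp [trForm]
  · exact trForm_self _

lemma trIP_eq_sum_trForm {n : ℕ} (u v : Fin n → F4) : trIP u v = ∑ j, trForm (u j) (v j) := rfl

lemma trIP_add_right {n : ℕ} (u v w : Fin n → F4) : trIP u (v + w) = trIP u v + trIP u w := by
  simp only [trIP_eq_sum_trForm, ← sum_add_distrib, Pi.add_apply, trForm, CharTwo.add_sq]
  exact sum_congr rfl fun i _ => by ring

lemma trIP_eq_zero_or_one {n : ℕ} (u v : Fin n → F4) : trIP u v = 0 ∨ trIP u v = 1 :=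
  IsIdempotentElem.iff_eq_zero_or_one.1 <| by
    rw [IsIdempotentElem, ← sq, trIP_eq_sum_trForm, CharTwo.sum_sq]
    simp only [trForm_sq]

lemma trIP_eq_trForm_add_trIP_removeNth {m : ℕ} (j : Fin (m + 1)) (u v : Fin (m + 1) → F4) :
    trIP u v = trForm (u j) (v j) + trIP (j.removeNth u) (j.removeNth v) :=
  Fin.sum_univ_succAbove _ j

lemma wt_le_wt_removeNth_add_one {m : ℕ} (j : Fin (m + 1)) (v : Fin (m + 1) → F4) :
    wt v ≤ wt (j.removeNth v) + 1 := by
  have hsub : {i | v i ≠ 0} ⊆ insert j (j.succAbove '' {i | j.removeNth v i ≠ 0}) := by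
    intro i hi
    rcases eq_or_ne i j with rfl | hij
    · exact Set.mem_insert _ _
    · obtain ⟨i', rfl⟩ := Fin.exists_succAbove_eq hij
      exact Set.mem_insert_of_mem _ ⟨i', hi, rfl⟩
  calc wt v ≤ (insert j (j.succAbove '' {i | j.removeNth v i ≠ 0})).ncard :=
        Set.ncard_le_ncard hsub
    _ ≤ (j.succAbove '' {i | j.removeNth v i ≠ 0}).ncard + 1 := Set.ncard_insert_le _ _
    _ = wt (j.removeNth v) + 1 := by
        rw [Set.ncard_image_of_injective _ Fin.succAbove_right_injective, wt]

section Shortening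

variable {n m : ℕ}

def subcodeAt (C : AddSubgroup (Fin n → F4)) (j : Fin n) (a : F4) : AddSubgroup (Fin n → F4) :=
  C ⊓ (AddSubgroup.zmultiples a).comap (Pi.evalAddMonoidHom (fun _ => F4) j)

lemma mem_subcodeAt {C : AddSubgroup (Fin n → F4)} {j : Fin n} {a : F4} {t : Fin n → F4} :
    t ∈ subcodeAt C j a ↔ t ∈ C ∧ t j ∈ AddSubgroup.zmultiples a :=
  Iff.rfl

def shorten (C : AddSubgroup (Fin (m + 1) → F4)) (j : Fin (m + 1)) (a : F4) :
    AddSubgroup (Fin m → F4) :=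
  (subcodeAt C j a).map (removeNthAddMonoidHom j)

lemma mem_shorten {C : AddSubgroup (Fin (m + 1) → F4)} {j : Fin (m + 1)} {a : F4}
    {u : Fin m → F4} : u ∈ shorten C j a ↔ ∃ t ∈ subcodeAt C j a, j.removeNth t = u :=
  Iff.rfl

lemma mem_trDual_of_cover {H C : AddSubgroup (Fin n → F4)} {v g : Fin n → F4}
    (hH : v ∈ trDual H) (hg : trIP v g = 0) (hcover : ∀ t ∈ C, t + g ∈ H ∨ t ∈ H) :
    v ∈ trDual C := by
  intro t ht
  rcases hcover t ht with h | h
  · have := trIP_add_right v t g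
    rwa [hH _ h, hg, add_zero, eq_comm] at this
  · exact hH t h

variable {C : AddSubgroup (Fin (m + 1) → F4)} {j : Fin (m + 1)} {a c : F4} {w : Fin (m + 1) → F4}

lemma exists_insertNth_notMem (hC : (C : Set (Fin (m + 1) → F4)) ⊆ trDual C) (hc : c ≠ 0) :
    ∃ a, a ≠ 0 ∧ a ≠ c ∧ j.insertNth a 0 ∉ C := by
  obtain ⟨z, hz⟩ := F4.exists_notMem_zmultiples hc
  have hzc : z + c ∉ AddSubgroup.zmultiples c := fun h =>
    hz ((AddSubgroup.add_mem_cancel_right _ (AddSubgroup.mem_zmultiples c)).1 h)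
  rw [CharTwo.mem_zmultiples_iff, not_or] at hz hzc
  by_contra! h
  have horth := hC (h z hz.1 hz.2) _ (h (z + c) hzc.1 hzc.2)
  rw [trIP_eq_trForm_add_trIP_removeNth j] at horth
  simp only [Fin.insertNth_apply_same, Fin.removeNth_insertNth] at horth
  rw [trForm_eq_one hz.1 hzc.1 fun h => hc (by simpa using h.symm)] at horth
  simp [trIP] at horth

lemma add_mem_subcodeAt_or_mem (hwC : w ∈ C) (hwj : w j = c) (ha : a ≠ 0) (hc : c ≠ 0)
    (hac : a ≠ c) : ∀ t ∈ C, t + w ∈ subcodeAt C j a ∨ t ∈ subcodeAt C j a := by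
  intro t ht
  simp only [mem_subcodeAt, C.add_mem_cancel_right hwC, Pi.add_apply, hwj, ht, true_and]
  exact F4.add_mem_zmultiples_or_mem ha (CharTwo.notMem_zmultiples_of_ne hc hac) (t j)

lemma relIndex_subcodeAt (hwC : w ∈ C) (hwj : w j = c) (ha : a ≠ 0) (hc : c ≠ 0)
    (hac : a ≠ c) : (subcodeAt C j a).relIndex C = 2 :=
  AddSubgroup.relIndex_eq_two_iff_exists_notMem_and.2 ⟨w, hwC,
    fun hw => CharTwo.notMem_zmultiples_of_ne hc hac (hwj ▸ (mem_subcodeAt.1 hw).2),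
    add_mem_subcodeAt_or_mem hwC hwj ha hc hac⟩

lemma card_eq_two_mul_card_subcodeAt (hwC : w ∈ C) (hwj : w j = c) (ha : a ≠ 0) (hc : c ≠ 0)
    (hac : a ≠ c) : Nat.card C = 2 * Nat.card (subcodeAt C j a) := by
  rw [AddSubgroup.card_eq_relIndex_mul_card (H := subcodeAt C j a) inf_le_left,
    relIndex_subcodeAt hwC hwj ha hc hac]

lemma card_shorten (haC : j.insertNth a 0 ∉ C) :
    Nat.card (shorten C j a) = Nat.card (subcodeAt C j a) := by
  have hker : (removeNthAddMonoidHom (M := F4) j).ker ⊓ subcodeAt C j a = ⊥ := by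
    refine (AddSubgroup.eq_bot_iff_forall _).2 fun t ht => ?_
    obtain ⟨htker, ht⟩ := AddSubgroup.mem_inf.1 ht
    obtain ⟨htC, htj⟩ := mem_subcodeAt.1 ht
    have ht_eq : t = j.insertNth (t j) 0 := by
      rw [← (AddMonoidHom.mem_ker).1 htker]
      exact (Fin.insertNth_self_removeNth j t).symm
    rcases CharTwo.mem_zmultiples_iff.1 htj with h | h
    · rw [ht_eq, h]
      simp
    · exact absurd (h ▸ ht_eq ▸ htC) haC
  rw [shorten, ← AddSubgroup.relIndex_ker, ← AddSubgroup.inf_relIndex_right, hker,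
    AddSubgroup.relIndex_bot_left]

lemma shorten_subset_trDual (hC : (C : Set (Fin (m + 1) → F4)) ⊆ trDual C) :
    (shorten C j a : Set (Fin m → F4)) ⊆ trDual (shorten C j a) := by
  rintro _ hu _ hv
  obtain ⟨t, ht, rfl⟩ := mem_shorten.1 hu
  obtain ⟨s, hs, rfl⟩ := mem_shorten.1 hv
  rw [mem_subcodeAt] at ht hs
  have := hC ht.1 s hs.1
  rwa [trIP_eq_trForm_add_trIP_removeNth j, trForm_eq_zero_of_mem_zmultiples ht.2 hs.2,
    zero_add] at this

lemma exists_mem_trDual_sdiff_removeNth_eq (hwC : w ∈ C) (hwj : w j = c) (ha : a ≠ 0)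
    (hc : c ≠ 0) (hac : a ≠ c) {u : Fin m → F4}
    (hu : u ∈ trDual (shorten C j a) \ shorten C j a) :
    ∃ v ∈ trDual C \ C, j.removeNth v = u := by
  obtain ⟨hu, huB⟩ := hu
  obtain ⟨x, hxa, hxw⟩ :
      ∃ x ∈ AddSubgroup.zmultiples a, trForm x c + trIP u (j.removeNth w) = 0 := by
    rcases trIP_eq_zero_or_one u (j.removeNth w) with h | h
    · exact ⟨0, zero_mem _, by simp [h, trForm]⟩
    · exact ⟨a, AddSubgroup.mem_zmultiples a, by
        rw [h, trForm_eq_one ha hc hac, CharTwo.add_self_eq_zero]⟩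
  have hdecomp (t : Fin (m + 1) → F4) :
      trIP (j.insertNth x u) t = trForm x (t j) + trIP u (j.removeNth t) := by
    rw [trIP_eq_trForm_add_trIP_removeNth j, Fin.insertNth_apply_same, Fin.removeNth_insertNth]
  refine ⟨j.insertNth x u, ⟨mem_trDual_of_cover (H := subcodeAt C j a) ?_ ?_
      (add_mem_subcodeAt_or_mem hwC hwj ha hc hac), fun hv => huB ?_⟩,
    Fin.removeNth_insertNth _ _ _⟩
  · intro t ht
    rw [hdecomp, trForm_eq_zero_of_mem_zmultiples hxa (mem_subcodeAt.1 ht).2, zero_add]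
    exact hu _ (mem_shorten.2 ⟨t, ht, rfl⟩)
  · rwa [hdecomp, hwj]
  · refine mem_shorten.2 ⟨_, mem_subcodeAt.2 ⟨hv, ?_⟩, Fin.removeNth_insertNth _ _ _⟩
    rwa [Fin.insertNth_apply_same]

end Shortening

theorem qcode_shorten_general (n k d : ℕ) (hn : 2 ≤ n) (hkn : k ≤ n - 1)
    (h : QCodeExists n k d) : QCodeExists (n - 1) k (d - 1) := by
  obtain ⟨m, rfl⟩ : ∃ m, n = m + 1 := ⟨n - 1, by omega⟩
  rw [Nat.add_sub_cancel] at hkn ⊢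
  obtain ⟨C, hC, hcard, hwt⟩ := h
  have hCbot : C ≠ ⊥ := fun hbot => by
    rw [hbot, AddSubgroup.card_bot] at hcard
    exact (Nat.one_lt_two_pow (by omega)).ne hcard
  obtain ⟨w, hwC, hw⟩ := (C.bot_or_exists_ne_zero).resolve_left hCbot
  obtain ⟨j, hwj⟩ := Function.ne_iff.1 hw
  obtain ⟨a, ha, hac, haC⟩ := exists_insertNth_notMem (j := j) hC hwj
  refine ⟨shorten C j a, shorten_subset_trDual hC, ?_, fun u hu => ?_⟩
  · have hhalf := card_eq_two_mul_card_subcodeAt hwC rfl ha hwj hac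
    rw [hcard, show m + 1 - k = m - k + 1 by omega, pow_succ] at hhalf
    rw [card_shorten haC]
    omega
  · obtain ⟨v, hv, rfl⟩ := exists_mem_trDual_sdiff_removeNth_eq hwC rfl ha hwj hac hu
    have := hwt v hv
    have := wt_le_wt_removeNth_add_one j v
    omega

/-- If an [[n,k,d]] code exists with n ≥ 2, then an [[n-1,k,d-1]] code
exists. -/
theorem qcode_shorten (n k d : ℕ) (hn : 2 ≤ n) (hd : 1 ≤ d) (hkn : k ≤ n - 1)
    (h : QCodeExists n k d) : QCodeExists (n - 1) k (d - 1) :=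
  qcode_shorten_general n k d hn hkn h
end
end

section
/- Let C ⊆ GF(4)ⁿ be a GF(4)-linear self-orthogonal code with |C| = 2^{n−k} such that every vector of C⊥ ∖ C has Hamming weight at least d. Let B ⊆ 𝔽₂ⁿ be the binary linear code spanned by the supports of the codewords of C, where the support of a codeword is its indicator vector of nonzero coordinates. If the Euclidean dual of B contains a word of weight m, then there exists a GF(4)-linear self-orthogonal code D ⊆ GF(4)^{n−m} with |D| ≤ 2^{n−k} such that every vector of D⊥ ∖ D has Hamming weight at least d. (There exists a linear [[n−m, k', d']] code with k' ≥ k − m and d' ≥ d.) -/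
/-!
Let `S` be the support of `w`. Since the nonzero elements of `GF(4)` are cube roots of unity,
`binSupp c j = (c j)³` read in `GF(4)`, so `w ⊥ binSupp c` says `∑_{j ∈ S} (c j)³ = 0` for every
`c ∈ C`. In characteristic two, `x y² + x² y = (x + y)³ + x³ + y³`, so polarizing shows that the
`S`-part of the trace form vanishes on `C`, hence so does the part off `S`: puncturing `C` on `S`
gives a self-orthogonal code `D` of length `n - m`. A vector of `D⊥ ∖ D`, extended by zero on `S`,
lies in `C⊥ ∖ C` and has the same weight.
-/

noncomputable section

open Finset Polynomial

open Classical in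
/-- The binary support indicator vector of a codeword. -/
def binSupp {n : ℕ} (u : Fin n → F4) : Fin n → ZMod 2 :=
  fun j => if u j = 0 then 0 else 1

theorem add_pow_three_of_charTwo {R : Type*} [CommRing R] [CharP R 2] (x y : R) :
    (x + y) ^ 3 = x ^ 3 + y ^ 3 + (x * y ^ 2 + x ^ 2 * y) := by
  linear_combination (x ^ 2 * y + x * y ^ 2) * CharTwo.two_eq_zero (R := R)

theorem sum_mul_sq_add_sq_mul_eq_zero {R ι : Type*} [CommRing R] [CharP R 2] (s : Finset ι)
    {x y : ι → R} (hx : ∑ j ∈ s, x j ^ 3 = 0) (hy : ∑ j ∈ s, y j ^ 3 = 0)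
    (hxy : ∑ j ∈ s, (x j + y j) ^ 3 = 0) :
    ∑ j ∈ s, (x j * y j ^ 2 + x j ^ 2 * y j) = 0 := by
  simpa only [add_pow_three_of_charTwo, sum_add_distrib, hx, hy, zero_add] using hxy

namespace F4

theorem castHom_binSupp {n : ℕ} (u : Fin n → F4) (j : Fin n) :
    ZMod.castHom (dvd_refl 2) F4 (binSupp u j) = u j ^ 3 := by
  by_cases hu : u j = 0 <;> simp [binSupp, hu, pow_three_eq_one]

theorem sum_support_pow_three_eq_zero {n : ℕ} {w : Fin n → ZMod 2} {u : Fin n → F4}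
    (h : ∑ j, w j * binSupp u j = 0) : ∑ j ∈ univ.filter (w · ≠ 0), u j ^ 3 = 0 := by
  have hcast := congrArg (ZMod.castHom (dvd_refl 2) F4) h
  rw [map_sum, map_zero] at hcast
  rw [sum_filter]
  refine (sum_congr rfl fun j _ => ?_).trans hcast
  rw [map_mul, castHom_binSupp]
  rcases (by decide : ∀ a : ZMod 2, a = 0 ∨ a = 1) (w j) with hw | hw <;> simp [hw]

end F4

section Puncture

variable {n n' : ℕ} (e : Fin n' ↪ Fin n)

theorem trIP_comp_embedding (u v : Fin n → F4) :
    trIP (u ∘ e) (v ∘ e) = ∑ j ∈ univ.map e, (u j * v j ^ 2 + u j ^ 2 * v j) := by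
  rw [sum_map]; rfl

theorem trIP_extend_zero (v : Fin n' → F4) (u : Fin n → F4) :
    trIP (Function.extend e v 0) u = trIP v (u ∘ e) := by
  classical
  unfold trIP
  rw [← sum_subset (subset_univ (univ.map e)), sum_map]
  · simp [e.injective.extend_apply]
  · intro j _ hj
    have hj' : ¬∃ i, e i = j := by simpa using hj
    simp [Function.extend_apply' _ _ _ hj']

theorem wt_extend_zero (v : Fin n' → F4) : wt (Function.extend e v 0) = wt v := by
  have hsupp : {j | Function.extend e v 0 j ≠ 0} = e '' {i | v i ≠ 0} := by
    ext j
    by_cases hj : ∃ i, e i = j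
    · obtain ⟨i, rfl⟩ := hj
      simp [e.injective.extend_apply, e.injective.eq_iff]
    · simp only [Function.extend_apply' _ _ _ hj, Pi.zero_apply, Set.mem_ofPred_eq, ne_eq,
        not_true_eq_false, false_iff, Set.mem_image, not_exists, not_and]
      exact fun i _ hi => hj ⟨i, hi⟩
  rw [wt, wt, hsupp, Set.ncard_image_of_injective _ e.injective]

theorem le_wt_of_mem_trDual_map_funLeft (C : Submodule F4 (Fin n → F4)) {d : ℕ}
    (hd : ∀ v ∈ trDual (C : Set (Fin n → F4)) \ C, d ≤ wt v) :
    ∀ v ∈ trDual (C.map (LinearMap.funLeft F4 F4 e) : Set (Fin n' → F4)) \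
      (C.map (LinearMap.funLeft F4 F4 e)), d ≤ wt v := by
  rintro v ⟨hv_dual, hv_not_mem⟩
  have hdual : Function.extend e v 0 ∈ trDual (C : Set (Fin n → F4)) := fun c hc => by
    rw [trIP_extend_zero]
    exact hv_dual _ (Submodule.mem_map_of_mem hc)
  have hnot_mem : Function.extend e v 0 ∉ C := fun hC => hv_not_mem <| by
    simpa [LinearMap.funLeft, Function.extend_comp e.injective] using Submodule.mem_map_of_mem
      (f := LinearMap.funLeft F4 F4 e) hC
  simpa [wt_extend_zero] using hd _ ⟨hdual, hnot_mem⟩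

end Puncture

theorem linear_shorten_by_support_dual_general (n k d m : ℕ)
    (C : Submodule F4 (Fin n → F4))
    (hso : ∀ u ∈ C, ∀ v ∈ C, trIP u v = 0)
    (hcard : Nat.card C = 2 ^ (n - k))
    (hd : ∀ v ∈ trDual (C : Set (Fin n → F4)) \ (C : Set (Fin n → F4)), d ≤ wt v)
    (w : Fin n → ZMod 2)
    (hw : ∀ b ∈ Submodule.span (ZMod 2) (binSupp '' (C : Set (Fin n → F4))),
      ∑ j, w j * b j = 0)
    (hwm : Set.ncard {j | w j ≠ 0} = m) :
    ∃ D : Submodule F4 (Fin (n - m) → F4),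
      (∀ u ∈ D, ∀ v ∈ D, trIP u v = 0) ∧
      Nat.card D ≤ 2 ^ (n - k) ∧
      ∀ v ∈ trDual (D : Set (Fin (n - m) → F4)) \ (D : Set (Fin (n - m) → F4)), d ≤ wt v := by
  classical
  set S := univ.filter (w · ≠ 0)
  have hcube : ∀ c ∈ C, ∑ j ∈ S, c j ^ 3 = 0 := fun c hc =>
    F4.sum_support_pow_three_eq_zero (hw _ (Submodule.subset_span ⟨c, hc, rfl⟩))
  have hcompl_card : Sᶜ.card = n - m := by
    rw [card_compl, Fintype.card_fin, ← hwm, ← Set.ncard_coe_finset]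
    simp [S]
  let e := (Sᶜ.orderEmbOfFin hcompl_card).toEmbedding
  refine ⟨C.map (LinearMap.funLeft F4 F4 e), ?_, ?_, le_wt_of_mem_trDual_map_funLeft e C hd⟩
  · rintro _ ⟨c, hc, rfl⟩ _ ⟨c', hc', rfl⟩
    have hS := sum_mul_sq_add_sq_mul_eq_zero S (hcube c hc) (hcube c' hc')
      (hcube _ (C.add_mem hc hc'))
    have hsplit := sum_add_sum_compl S fun j => c j * c' j ^ 2 + c j ^ 2 * c' j
    rw [hS, zero_add] at hsplit
    change trIP (c ∘ e) (c' ∘ e) = 0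
    rw [trIP_comp_embedding, map_orderEmbOfFin_univ, hsplit]
    exact hso c hc c' hc'
  · exact hcard ▸ Nat.card_le_card_of_surjective _ (LinearMap.submoduleMap_surjective _ C)

/-- Shortening a linear [[n,k,d]] code on the support of a weight-m word of
the dual of the binary code generated by the supports yields a linear
[[n-m, k', d']] code with k' ≥ k-m and d' ≥ d. -/
theorem linear_shorten_by_support_dual (n k d m : ℕ) (hk : k ≤ n)
    (C : Submodule F4 (Fin n → F4))
    (hso : ∀ u ∈ C, ∀ v ∈ C, trIP u v = 0)
    (hcard : Nat.card C = 2 ^ (n - k))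
    (hd : ∀ v ∈ trDual (C : Set (Fin n → F4)) \ (C : Set (Fin n → F4)), d ≤ wt v)
    (w : Fin n → ZMod 2)
    (hw : ∀ b ∈ Submodule.span (ZMod 2) (binSupp '' (C : Set (Fin n → F4))),
      ∑ j, w j * b j = 0)
    (hwm : Set.ncard {j | w j ≠ 0} = m) :
    ∃ D : Submodule F4 (Fin (n - m) → F4),
      (∀ u ∈ D, ∀ v ∈ D, trIP u v = 0) ∧
      Nat.card D ≤ 2 ^ (n - k) ∧
      ∀ v ∈ trDual (D : Set (Fin (n - m) → F4)) \ (D : Set (Fin (n - m) → F4)), d ≤ wt v :=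
  linear_shorten_by_support_dual_general n k d m C hso hcard hd w hw hwm
end
end

section
/- Let n be odd, let κ ∈ {1, ω, ω̄} ⊆ GF(4), and let g(x) = Σ_{j=0}^{n−1} gⱼ xʲ ∈ GF(4)[x] be a divisor of xⁿ − κ of degree less than n. Let C_g ⊆ GF(4)ⁿ be the associated linear constacyclic code: the set of coefficient vectors (f₀, …, f_{n−1}) of the residues f(x)·g(x) mod (xⁿ − κ) as f ranges over GF(4)[x]. Define g†(x) = κ·ḡ₀ + Σ_{j=1}^{n−1} ḡ_{n−j} xʲ. Then C_g is self-orthogonal with respect to the trace inner product if and only if g(x)·g†(x) ≡ 0 (mod xⁿ − κ). -/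
noncomputable section

open Finset Polynomial

/-- The linear constacyclic code with generator polynomial g: the coefficient
vectors of the residues f·g mod (Xⁿ - κ). -/
def ccCode (n : ℕ) (κ : F4) (g : Polynomial F4) : Set (Fin n → F4) :=
  {u | ∃ f : Polynomial F4,
    u = fun i : Fin n => ((f * g) %ₘ (X ^ n - Polynomial.C κ)).coeff i}

/-- The polynomial g†(x) = κ ḡ₀ + Σ_{j=1}^{n-1} ḡ_{n-j} xʲ. -/
def gDagger (n : ℕ) (κ : F4) (g : Polynomial F4) : Polynomial F4 :=
  Polynomial.C (κ * (g.coeff 0) ^ 2) +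
    ∑ j ∈ Finset.Ico 1 n, Polynomial.C ((g.coeff (n - j)) ^ 2) * X ^ j

lemma F4_two : (2 : F4) = 0 := by
  have h := CharP.cast_eq_zero F4 2
  exact_mod_cast h

lemma F4_pow4 (x : F4) : x ^ 4 = x := by
  letI : Fintype F4 := Fintype.ofFinite F4
  have h := FiniteField.pow_card x
  have hc : Fintype.card F4 = 4 := by
    rw [← Nat.card_eq_fintype_card, GaloisField.card 2 2 (by norm_num)]; norm_num
  rwa [hc] at h

section Aux
variable {n : ℕ} {κ : F4}

lemma natDegree_lt_of_coeff (hn : n ≠ 0) {p : Polynomial F4}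
    (h : ∀ m, n ≤ m → p.coeff m = 0) : p.natDegree < n := by
  by_cases hp : p = 0
  · simpa [hp] using Nat.pos_of_ne_zero hn
  · rw [natDegree_lt_iff_degree_lt hp, degree_lt_iff_coeff_zero]
    intro m hm
    exact h m (by exact_mod_cast hm)

lemma dagger_coeff (hn : n ≠ 0) (b : Polynomial F4) (m : ℕ) :
    (gDagger n κ b).coeff m =
      if m = 0 then κ * (b.coeff 0) ^ 2
      else if m < n then (b.coeff (n - m)) ^ 2 else 0 := by
  unfold gDagger
  rw [coeff_add, coeff_C, finset_sum_coeff]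
  simp_rw [coeff_C_mul, coeff_X_pow, mul_ite, mul_one, mul_zero]
  rw [Finset.sum_ite_eq (Finset.Ico 1 n) m (fun j => (b.coeff (n - j)) ^ 2)]
  by_cases h0 : m = 0
  · simp [h0, hn]
  · by_cases h1 : m < n
    · simp [h0, Finset.mem_Ico, Nat.pos_of_ne_zero h0, h1]
    · simp [h0, Finset.mem_Ico, h1]

lemma dagger_natDegree_lt (hn : n ≠ 0) (b : Polynomial F4) :
    (gDagger n κ b).natDegree < n := by
  refine natDegree_lt_of_coeff hn (fun m hm => ?_)
  rw [dagger_coeff hn]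
  have h0 : m ≠ 0 := by omega
  have h1 : ¬ m < n := by omega
  simp [h0, h1]

lemma coeff_modByMonic_zero (hn : n ≠ 0) (q : Polynomial F4) (hq : q.natDegree < 2 * n) :
    (q %ₘ (X ^ n - C κ)).coeff 0 = q.coeff 0 + κ * q.coeff n := by
  set P : Polynomial F4 := X ^ n - C κ with hP
  have hm : P.Monic := monic_X_pow_sub_C κ hn
  have hPnd : P.natDegree = n := natDegree_X_pow_sub_C
  have key := modByMonic_add_div q P
  set r := q %ₘ P with hr
  set h := q /ₘ P with hh
  have hrdeg : r.degree < P.degree := degree_modByMonic_lt q hm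
  have hrnd : r.natDegree < n := by
    refine natDegree_lt_of_coeff hn (fun m hm' => ?_)
    apply coeff_eq_zero_of_degree_lt
    calc r.degree < P.degree := hrdeg
    _ = (n : WithBot ℕ) := degree_X_pow_sub_C (Nat.pos_of_ne_zero hn) κ
    _ ≤ (m : WithBot ℕ) := by exact_mod_cast hm'
  have hhnd : h.natDegree < n := by
    rw [hh, natDegree_divByMonic q hm, hPnd]; omega
  have hq0 : q.coeff 0 = r.coeff 0 - κ * h.coeff 0 := by
    have : q.coeff 0 = (r + P * h).coeff 0 := by rw [key]
    rw [this, coeff_add, mul_coeff_zero, hP]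
    simp [coeff_X_pow, (Ne.symm hn : (0:ℕ) ≠ n)]
    ring
  have hqn : q.coeff n = h.coeff 0 := by
    have : q.coeff n = (r + P * h).coeff n := by rw [key]
    rw [this, coeff_add, coeff_eq_zero_of_natDegree_lt hrnd, hP, sub_mul, coeff_sub]
    have h1 : ((X:Polynomial F4) ^ n * h).coeff n = h.coeff 0 := by
      simpa using coeff_X_pow_mul h n 0
    rw [h1, coeff_C_mul, coeff_eq_zero_of_natDegree_lt hhnd]
    ring
  rw [hq0, hqn]; ring

end Aux

section Aux2
variable {n : ℕ} {κ : F4}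

lemma range_eq_insert (hn : n ≠ 0) : Finset.range n = insert 0 (Finset.Ico 1 n) := by
  ext m; simp [Finset.mem_Ico]; omega

lemma L2 (hn : n ≠ 0) (a b : Polynomial F4) (ha : a.natDegree < n) (hb : b.natDegree < n) :
    ((a * gDagger n κ b) %ₘ (X ^ n - C κ)).coeff 0 =
      κ * ∑ j ∈ Finset.range n, a.coeff j * (b.coeff j) ^ 2 := by
  have hD := dagger_natDegree_lt (κ := κ) hn b
  have hdeg : (a * gDagger n κ b).natDegree < 2 * n := by
    calc (a * gDagger n κ b).natDegree ≤ a.natDegree + (gDagger n κ b).natDegree :=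
      natDegree_mul_le
    _ < 2 * n := by omega
  rw [coeff_modByMonic_zero hn _ hdeg]
  have hc0 : (a * gDagger n κ b).coeff 0 = a.coeff 0 * (κ * (b.coeff 0) ^ 2) := by
    rw [mul_coeff_zero, dagger_coeff hn]; simp
  have hcn : (a * gDagger n κ b).coeff n = ∑ k ∈ Finset.Ico 1 n, a.coeff k * (b.coeff k) ^ 2 := by
    rw [coeff_mul, Finset.Nat.sum_antidiagonal_eq_sum_range_succ_mk]
    have hsplit : Finset.range (n + 1) = insert 0 (insert n (Finset.Ico 1 n)) := by
      ext m; simp [Finset.mem_Ico]; omega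
    rw [hsplit, Finset.sum_insert (by simp [Finset.mem_Ico]; omega),
      Finset.sum_insert (by simp [Finset.mem_Ico])]
    have t0 : a.coeff 0 * (gDagger n κ b).coeff (n - 0) = 0 := by
      rw [dagger_coeff hn]
      simp [hn, Nat.sub_zero, lt_irrefl]
    have tn : a.coeff n * (gDagger n κ b).coeff (n - n) = 0 := by
      rw [coeff_eq_zero_of_natDegree_lt ha]; ring
    rw [t0, tn, zero_add, zero_add]
    refine Finset.sum_congr rfl (fun k hk => ?_)
    simp only [Finset.mem_Ico] at hk
    rw [dagger_coeff hn]
    have h1 : ¬ (n - k = 0) := by omega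
    have h2 : n - k < n := by omega
    have h3 : n - (n - k) = k := by omega
    simp [h1, h2, h3]
  rw [hc0, hcn, range_eq_insert hn, Finset.sum_insert (by simp [Finset.mem_Ico])]
  ring

end Aux2

section Aux3
variable {n : ℕ} {κ : F4}

def sigmaHom (n : ℕ) (κ : F4) : Polynomial F4 →+* AdjoinRoot (X ^ n - C κ : Polynomial F4) :=
  eval₂RingHom (((AdjoinRoot.mk _).comp (C : F4 →+* Polynomial F4)).comp (frobenius F4 2))
    (AdjoinRoot.mk _ (C (κ^2) * X ^ (n-1)))

lemma root_pow_n :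
    (AdjoinRoot.root (X ^ n - C κ : Polynomial F4))^n
      = AdjoinRoot.mk (X ^ n - C κ) (C κ) := by
  have h := AdjoinRoot.mk_self (f := (X ^ n - C κ : Polynomial F4))
  rw [map_sub, map_pow, AdjoinRoot.mk_X, sub_eq_zero] at h
  exact h

lemma y_cubed (hκ3 : κ^3 = 1) :
    (AdjoinRoot.mk (X ^ n - C κ) (C κ))^3 = 1 := by
  rw [← map_pow, ← C_pow, hκ3, map_one, map_one]

lemma sigma_X_eq : sigmaHom n κ X =
    (AdjoinRoot.mk (X ^ n - C κ) (C κ))^2 * (AdjoinRoot.root (X ^ n - C κ))^(n-1) := by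
  show eval₂ _ _ X = _
  rw [eval₂_X]
  simp only [map_mul, map_pow, AdjoinRoot.mk_X]

lemma sigma_C_eq (c : F4) : sigmaHom n κ (C c) = AdjoinRoot.mk (X ^ n - C κ) (C (c^2)) := by
  show eval₂ _ _ (C c) = _
  rw [eval₂_C]
  simp [frobenius_def]

lemma mkκ_rinv_pow (hn : n ≠ 0) (hκ3 : κ^3 = 1) (j : ℕ) (hj : j ≤ n) :
    AdjoinRoot.mk (X ^ n - C κ) (C κ) *
      ((AdjoinRoot.mk (X ^ n - C κ) (C κ))^2 * (AdjoinRoot.root (X ^ n - C κ))^(n-1))^j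
      = (AdjoinRoot.root (X ^ n - C κ : Polynomial F4))^(n-j) := by
  set y := AdjoinRoot.mk (X ^ n - C κ) (C κ) with hy
  set r := AdjoinRoot.root (X ^ n - C κ : Polynomial F4) with hr
  have h1 : (y^2 * r^(n-1)) * r = 1 := by
    rw [mul_assoc, ← pow_succ, Nat.sub_add_cancel (Nat.one_le_iff_ne_zero.2 hn), root_pow_n,
      ← hy, ← pow_succ, y_cubed hκ3]
  have h2 : y = r^(n-j) * r^j := by
    rw [← pow_add, Nat.sub_add_cancel hj, root_pow_n]
  calc y * (y^2 * r^(n-1))^j = r^(n-j) * ((y^2 * r^(n-1)) * r)^j := by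
        rw [h2, mul_pow]; ring
    _ = r^(n-j) := by rw [h1, one_pow, mul_one]

lemma sigma_P_eq_zero (hn : n ≠ 0) (hκ3 : κ^3 = 1) :
    sigmaHom n κ (X ^ n - C κ) = 0 := by
  set y := AdjoinRoot.mk (X ^ n - C κ) (C κ) with hy
  set r := AdjoinRoot.root (X ^ n - C κ : Polynomial F4) with hr
  have h0 : (r^(n-1))^n = y^(n-1) := by
    rw [← pow_mul, Nat.mul_comm, pow_mul, root_pow_n]
  have h1 : AdjoinRoot.mk (X ^ n - C κ) (C (κ^2)) = y^2 := by
    rw [C_pow, map_pow]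
  rw [map_sub, map_pow, sigma_X_eq, sigma_C_eq, mul_pow, ← hy, ← hr, h0, ← pow_mul, ← pow_add,
    sub_eq_zero, h1]
  have h2 : 2 * n + (n - 1) = 2 + 3 * (n - 1) := by omega
  rw [h2, pow_add, pow_mul, y_cubed hκ3, one_pow, mul_one]



lemma sigma_mod (hn : n ≠ 0) (hκ3 : κ^3 = 1) (q : Polynomial F4) :
    sigmaHom n κ (q %ₘ (X ^ n - C κ)) = sigmaHom n κ q := by
  have hm : (X ^ n - C κ : Polynomial F4).Monic := monic_X_pow_sub_C κ hn
  have key := modByMonic_add_div q (X ^ n - C κ)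
  calc sigmaHom n κ (q %ₘ (X ^ n - C κ))
      = sigmaHom n κ (q %ₘ (X ^ n - C κ)) + sigmaHom n κ (X ^ n - C κ) *
          sigmaHom n κ (q /ₘ (X ^ n - C κ)) := by rw [sigma_P_eq_zero hn hκ3, zero_mul, add_zero]
    _ = sigmaHom n κ (q %ₘ (X ^ n - C κ) + (X ^ n - C κ) * (q /ₘ (X ^ n - C κ))) := by
        rw [map_add, map_mul]
    _ = sigmaHom n κ q := by rw [key]

lemma mk_mod (hn : n ≠ 0) (q : Polynomial F4) :
    AdjoinRoot.mk (X ^ n - C κ) (q %ₘ (X ^ n - C κ)) = AdjoinRoot.mk (X ^ n - C κ) q := by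
  have hm : (X ^ n - C κ : Polynomial F4).Monic := monic_X_pow_sub_C κ hn
  have key := modByMonic_add_div q (X ^ n - C κ)
  calc AdjoinRoot.mk (X ^ n - C κ) (q %ₘ (X ^ n - C κ))
      = AdjoinRoot.mk (X ^ n - C κ) (q %ₘ (X ^ n - C κ)) +
          AdjoinRoot.mk (X ^ n - C κ) (X ^ n - C κ) *
          AdjoinRoot.mk (X ^ n - C κ) (q /ₘ (X ^ n - C κ)) := by
        rw [AdjoinRoot.mk_self, zero_mul, add_zero]
    _ = AdjoinRoot.mk (X ^ n - C κ) (q %ₘ (X ^ n - C κ) + (X ^ n - C κ) * (q /ₘ (X ^ n - C κ))) := by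
        rw [map_add, map_mul]
    _ = AdjoinRoot.mk (X ^ n - C κ) q := by rw [key]

lemma dagger_eq (hn : n ≠ 0) (hκ3 : κ^3 = 1) (b : Polynomial F4) (hb : b.natDegree < n) :
    AdjoinRoot.mk (X ^ n - C κ) (gDagger n κ b)
      = AdjoinRoot.mk (X ^ n - C κ) (C κ) * sigmaHom n κ b := by
  set y := AdjoinRoot.mk (X ^ n - C κ) (C κ) with hy
  set r := AdjoinRoot.root (X ^ n - C κ : Polynomial F4) with hr
  have hσ : sigmaHom n κ b = ∑ i ∈ Finset.range n,
      AdjoinRoot.mk (X ^ n - C κ) (C ((b.coeff i)^2)) * (y^2 * r^(n-1))^i := by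
    show eval₂ _ _ b = _
    rw [eval₂_eq_sum_range' _ hb]
    refine Finset.sum_congr rfl (fun i _ => ?_)
    simp only [RingHom.comp_apply, frobenius_def, AdjoinRoot.mk_C, map_mul, map_pow,
      AdjoinRoot.mk_X, hy, hr]
  have hL : AdjoinRoot.mk (X ^ n - C κ) (gDagger n κ b)
      = AdjoinRoot.mk (X ^ n - C κ) (C (κ * (b.coeff 0)^2)) +
        ∑ j ∈ Finset.Ico 1 n, AdjoinRoot.mk (X ^ n - C κ) (C ((b.coeff (n-j))^2)) * r^j := by
    rw [gDagger, map_add, map_sum]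
    refine congrArg₂ (· + ·) rfl (Finset.sum_congr rfl (fun j _ => ?_))
    simp only [map_mul, map_pow, AdjoinRoot.mk_C, AdjoinRoot.mk_X, ← hr]
  rw [hL, hσ, Finset.mul_sum, range_eq_insert hn, Finset.sum_insert (by simp [Finset.mem_Ico])]
  congr 1
  · rw [pow_zero, mul_one, ← map_mul, ← C_mul]
  · refine Finset.sum_nbij' (fun i => n - i) (fun i => n - i) ?_ ?_ ?_ ?_ ?_ <;>
      (intro a ha; simp only [Finset.mem_Ico] at ha)
    · simp only [Finset.mem_Ico]; omega
    · simp only [Finset.mem_Ico]; omega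
    · omega
    · omega
    · have hv := mkκ_rinv_pow hn hκ3 (n - a) (by omega)
      have h4 : n - (n - a) = a := by omega
      rw [h4] at hv
      rw [mul_left_comm, hv, hr]

end Aux3


def Sval (n : ℕ) (κ : F4) (g f1 f2 : Polynomial F4) : F4 :=
  ∑ j ∈ Finset.range n,
    ((f1 * g) %ₘ (X ^ n - C κ)).coeff j * (((f2 * g) %ₘ (X ^ n - C κ)).coeff j) ^ 2

/-- A linear constacyclic code with generator polynomial g is self-orthogonal
with respect to the trace inner product iff g·g† ≡ 0 (mod Xⁿ - κ). -/
theorem constacyclic_selforth_iff (n : ℕ) (hn : Odd n) (ω κ : F4)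
    (hω : ω ^ 2 = ω + 1) (hκ : κ = 1 ∨ κ = ω ∨ κ = ω ^ 2)
    (g : Polynomial F4) (hdvd : g ∣ X ^ n - Polynomial.C κ)
    (hdeg : g.degree < n) :
    (∀ u ∈ ccCode n κ g, ∀ v ∈ ccCode n κ g, trIP u v = 0) ↔
      (X ^ n - Polynomial.C κ) ∣ g * gDagger n κ g := by
  classical
  have hn0 : n ≠ 0 := by rcases hn with ⟨k, hk⟩; omega
  have htwo := F4_two
  have hω3 : ω ^ 3 = 1 := by linear_combination (ω + 1) * hω + ω * htwo
  have hκ3 : κ ^ 3 = 1 := by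
    rcases hκ with h | h | h <;> subst h
    · exact one_pow 3
    · exact hω3
    · rw [← pow_mul, Nat.mul_comm, pow_mul, hω3, one_pow]
  have hκ0 : κ ≠ 0 := by
    intro h; rw [h] at hκ3; simp at hκ3
  have hκ21 : κ ^ 2 * κ = 1 := by rw [← pow_succ]; exact hκ3
  have hPm : (X ^ n - C κ : Polynomial F4).Monic := monic_X_pow_sub_C κ hn0
  have hPdeg : (X ^ n - C κ : Polynomial F4).degree = (n : WithBot ℕ) :=
    degree_X_pow_sub_C (Nat.pos_of_ne_zero hn0) κ
  have hgnd : g.natDegree < n := by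
    refine natDegree_lt_of_coeff hn0 (fun m hm => coeff_eq_zero_of_degree_lt ?_)
    exact lt_of_lt_of_le hdeg (by exact_mod_cast hm)
  have hres : ∀ f : Polynomial F4, ((f * g) %ₘ (X ^ n - C κ)).natDegree < n := by
    intro f
    refine natDegree_lt_of_coeff hn0 (fun m hm => coeff_eq_zero_of_degree_lt ?_)
    calc ((f * g) %ₘ (X ^ n - C κ)).degree < (X ^ n - C κ : Polynomial F4).degree :=
          degree_modByMonic_lt _ hPm
      _ = (n : WithBot ℕ) := hPdeg
      _ ≤ (m : WithBot ℕ) := by exact_mod_cast hm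
  -- main identity
  have main : ∀ f1 f2 : Polynomial F4, Sval n κ g f1 f2 =
      κ ^ 2 * ((AdjoinRoot.modByMonicHom hPm
        (AdjoinRoot.mk (X ^ n - C κ) f1 * sigmaHom n κ f2 *
          AdjoinRoot.mk (X ^ n - C κ) (g * gDagger n κ g))).coeff 0) := by
    intro f1 f2
    have h1 : ((((f1 * g) %ₘ (X ^ n - C κ)) * gDagger n κ ((f2 * g) %ₘ (X ^ n - C κ)))
        %ₘ (X ^ n - C κ)).coeff 0 = κ * Sval n κ g f1 f2 :=
      L2 hn0 _ _ (hres f1) (hres f2)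
    have h2 : AdjoinRoot.mk (X ^ n - C κ)
        (((f1 * g) %ₘ (X ^ n - C κ)) * gDagger n κ ((f2 * g) %ₘ (X ^ n - C κ)))
        = AdjoinRoot.mk (X ^ n - C κ) f1 * sigmaHom n κ f2 *
          AdjoinRoot.mk (X ^ n - C κ) (g * gDagger n κ g) := by
      simp only [map_mul]
      rw [dagger_eq hn0 hκ3 _ (hres f2), mk_mod hn0 (f1 * g), sigma_mod hn0 hκ3 (f2 * g),
        dagger_eq hn0 hκ3 g hgnd]
      simp only [map_mul]
      ring
    calc Sval n κ g f1 f2 = κ ^ 2 * (κ * Sval n κ g f1 f2) := by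
          rw [← mul_assoc, hκ21, one_mul]
      _ = κ ^ 2 * ((AdjoinRoot.modByMonicHom hPm
            (AdjoinRoot.mk (X ^ n - C κ) f1 * sigmaHom n κ f2 *
              AdjoinRoot.mk (X ^ n - C κ) (g * gDagger n κ g))).coeff 0) := by
          rw [← h1, ← h2, AdjoinRoot.modByMonicHom_mk]
  have trform : ∀ f1 f2 : Polynomial F4,
      trIP (fun i : Fin n => ((f1 * g) %ₘ (X ^ n - Polynomial.C κ)).coeff i)
        (fun i : Fin n => ((f2 * g) %ₘ (X ^ n - Polynomial.C κ)).coeff i)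
        = Sval n κ g f1 f2 + (Sval n κ g f1 f2) ^ 2 := by
    intro f1 f2
    have hsq : (Sval n κ g f1 f2) ^ 2 = ∑ j ∈ Finset.range n,
        (((f1 * g) %ₘ (X ^ n - C κ)).coeff j) ^ 2 * ((f2 * g) %ₘ (X ^ n - C κ)).coeff j := by
      rw [Sval, sum_pow_char 2]
      refine Finset.sum_congr rfl (fun j _ => ?_)
      rw [mul_pow, ← pow_mul, show 2*2 = 4 from rfl, F4_pow4]
    rw [trIP, Fin.sum_univ_eq_sum_range (fun j =>
      ((f1 * g) %ₘ (X ^ n - C κ)).coeff j * (((f2 * g) %ₘ (X ^ n - C κ)).coeff j) ^ 2 +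
      (((f1 * g) %ₘ (X ^ n - C κ)).coeff j) ^ 2 * ((f2 * g) %ₘ (X ^ n - C κ)).coeff j),
      Finset.sum_add_distrib, hsq, Sval]
  constructor
  · intro hso
    have hS0 : ∀ f1 f2 : Polynomial F4, Sval n κ g f1 f2 = 0 := by
      intro f1 f2
      have h1 := hso _ ⟨f1, rfl⟩ _ ⟨f2, rfl⟩
      rw [trform f1 f2] at h1
      have h1' := hso _ ⟨C ω * f1, rfl⟩ _ ⟨f2, rfl⟩
      rw [trform (C ω * f1) f2] at h1'
      have hlin : Sval n κ g (C ω * f1) f2 = ω * Sval n κ g f1 f2 := by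
        have ha' : ((C ω * f1 * g) %ₘ (X ^ n - C κ)) = C ω * ((f1 * g) %ₘ (X ^ n - C κ)) := by
          rw [mul_assoc, ← smul_eq_C_mul, ← smul_eq_C_mul, smul_modByMonic]
        rw [Sval, Sval, Finset.mul_sum]
        refine Finset.sum_congr rfl (fun j _ => ?_)
        rw [ha', coeff_C_mul]
        ring
      rw [hlin] at h1'
      set t := Sval n κ g f1 f2 with hts
      have ht2 : t ^ 2 = t := by linear_combination h1 - t * htwo
      have h4 : (ω + ω ^ 2) * t = 0 := by
        linear_combination h1' + ω ^ 2 * ht2 + (ω ^ 2 * (t - t ^ 2)) * htwo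
      have hω1 : ω + ω ^ 2 = 1 := by linear_combination hω + ω * htwo
      rw [hω1, one_mul] at h4
      exact h4
    have hφ : ∀ f1 : Polynomial F4,
        ((f1 * ((g * gDagger n κ g) %ₘ (X ^ n - C κ))) %ₘ (X ^ n - C κ)).coeff 0 = 0 := by
      intro f1
      have h5 := main f1 1
      rw [hS0 f1 1] at h5
      have h6 : ((AdjoinRoot.modByMonicHom hPm
          (AdjoinRoot.mk (X ^ n - C κ) f1 * sigmaHom n κ 1 *
            AdjoinRoot.mk (X ^ n - C κ) (g * gDagger n κ g))).coeff 0) = 0 := by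
        rcases mul_eq_zero.1 h5.symm with h | h
        · exact absurd h (pow_ne_zero 2 hκ0)
        · exact h
      have h7 : AdjoinRoot.mk (X ^ n - C κ)
              (f1 * ((g * gDagger n κ g) %ₘ (X ^ n - C κ)))
          = AdjoinRoot.mk (X ^ n - C κ) f1 * sigmaHom n κ 1 *
            AdjoinRoot.mk (X ^ n - C κ) (g * gDagger n κ g) := by
        rw [map_mul, mk_mod hn0, map_one, mul_one]
      rw [← h7, AdjoinRoot.modByMonicHom_mk] at h6
      exact h6
    have hqnd : ((g * gDagger n κ g) %ₘ (X ^ n - C κ)).natDegree < n := by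
      refine natDegree_lt_of_coeff hn0 (fun m hm => coeff_eq_zero_of_degree_lt ?_)
      calc ((g * gDagger n κ g) %ₘ (X ^ n - C κ)).degree < (X ^ n - C κ : Polynomial F4).degree :=
            degree_modByMonic_lt _ hPm
        _ = (n : WithBot ℕ) := hPdeg
        _ ≤ (m : WithBot ℕ) := by exact_mod_cast hm
    have hcoeff : ∀ m, ((g * gDagger n κ g) %ₘ (X ^ n - C κ)).coeff m = 0 := by
      intro m
      by_cases hmn : n ≤ m
      · exact coeff_eq_zero_of_natDegree_lt (lt_of_lt_of_le hqnd hmn)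
      push_neg at hmn
      by_cases hm0 : m = 0
      · subst hm0
        have h8 := hφ 1
        rw [one_mul, (modByMonic_eq_self_iff hPm).2 (degree_modByMonic_lt _ hPm)] at h8
        exact h8
      · have h8 := hφ (X ^ (n - m))
        have hnd2 : ((X : Polynomial F4) ^ (n - m) *
            ((g * gDagger n κ g) %ₘ (X ^ n - C κ))).natDegree < 2 * n := by
          calc ((X : Polynomial F4) ^ (n - m) *
              ((g * gDagger n κ g) %ₘ (X ^ n - C κ))).natDegree
              ≤ ((X : Polynomial F4) ^ (n - m)).natDegree +
                ((g * gDagger n κ g) %ₘ (X ^ n - C κ)).natDegree := natDegree_mul_le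
            _ ≤ (n - m) + ((g * gDagger n κ g) %ₘ (X ^ n - C κ)).natDegree := by
                rw [natDegree_X_pow]
            _ < 2 * n := by omega
        rw [coeff_modByMonic_zero hn0 _ hnd2, coeff_X_pow_mul', coeff_X_pow_mul'] at h8
        rw [if_neg (show ¬ (n - m ≤ 0) by omega), if_pos (show n - m ≤ n by omega),
          show n - (n - m) = m by omega, zero_add] at h8
        rcases mul_eq_zero.1 h8 with h | h
        · exact absurd h hκ0
        · exact h
    have hq0 : (g * gDagger n κ g) %ₘ (X ^ n - C κ) = 0 :=
      Polynomial.ext fun m => by rw [hcoeff]; simp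
    exact (modByMonic_eq_zero_iff_dvd hPm).1 hq0
  · intro hdv u hu v hv
    obtain ⟨f1, rfl⟩ := hu
    obtain ⟨f2, rfl⟩ := hv
    rw [trform f1 f2, main f1 f2, AdjoinRoot.mk_eq_zero.2 hdv, mul_zero, map_zero]
    simp
end
end
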